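/- The coproduct Δ_list is coassociative: (Δ_list ⊗ id) ∘ Δ_list = (id ⊗ Δ_list) ∘ Δ_list as linear maps k⟨L⟩ → k⟨L⟩ ⊗_k k⟨L⟩ ⊗_k k⟨L⟩. -/

import Mathlib

open scoped TensorProduct

/-- A monomial: a nonzero finitely supported multi-index with support contained in `{1,2,…}`. -/
def Mon : Type := {m : ℕ →₀ ℕ // m ≠ 0 ∧ m 0 = 0}

namespace Mon

/-- Product of monomials: pointwise addition of multi-indices. -/
noncomputable instance : Mul Mon :=
  ⟨fun a b =>
    ⟨a.1 + b.1, by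
      constructor
      · intro h
        exact a.2.1 ((add_eq_zero.mp h).1)
      · simp [Finsupp.add_apply, a.2.2, b.2.2]⟩⟩

/-- The total degree (weight) of a monomial. -/
def w (m : Mon) : ℕ := m.1.sum fun _ v => v

/-- The set of variable indices occurring in a list of monomials. -/
def IndAlph (l : List Mon) : Finset ℕ := (l.map fun m => m.1.support).foldr (· ∪ ·) ∅

/-- The maximal variable index occurring in a list of monomials (`0` for the empty list). -/
def maxInd (l : List Mon) : ℕ := (IndAlph l).sup id

/-- The embedding `i ↦ i + p` of `ℕ` into itself. -/
def addEmb (p : ℕ) : ℕ ↪ ℕ := ⟨fun i => i + p, fun a b h => by simpa using h⟩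

/-- The shift `T_p` of a monomial: translate the support by `p`. -/
noncomputable def Tmon (p : ℕ) (m : Mon) : Mon :=
  ⟨m.1.embDomain (addEmb p), by
    refine ⟨fun h => m.2.1 (Finsupp.embDomain_eq_zero.mp h), ?_⟩
    by_cases hp : p = 0
    · subst hp
      have h0 : (Finsupp.embDomain (addEmb 0) m.1) ((addEmb 0) 0) = m.1 0 :=
        Finsupp.embDomain_apply_self _ _ _
      simpa [addEmb] using h0.trans m.2.2
    · apply Finsupp.embDomain_notin_range
      rintro ⟨i, hi⟩
      have hi' : i + p = 0 := hi
      simp only [addEmb, Function.Embedding.coeFn_mk] at hi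
      omega⟩

/-- Shifted concatenation of lists of monomials. -/
noncomputable def sconc (l₁ l₂ : List Mon) : List Mon := l₁ ++ l₂.map (Tmon (maxInd l₁))

/-- A list of monomials is compact when its alphabet has no holes:
`IndAlph l = {1,…,card (IndAlph l)}`. -/
def Compact (l : List Mon) : Prop := IndAlph l = Finset.Icc 1 (IndAlph l).card

/-- The re-indexing function of a list `l` : on `IndAlph l` it is the unique strictly
increasing bijection onto `{1,…,card (IndAlph l)}` (extended injectively elsewhere). -/
noncomputable def phi (l : List Mon) (i : ℕ) : ℕ :=
  if h : i ∈ IndAlph l then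
    (((IndAlph l).orderIsoOfFin rfl).symm ⟨i, h⟩ : Fin (IndAlph l).card) + 1
  else i + (IndAlph l).card + 1

lemma phi_pos (l : List Mon) (i : ℕ) : 1 ≤ phi l i := by
  unfold phi; split_ifs <;> omega

lemma phi_inj (l : List Mon) : Function.Injective (phi l) := by
  intro a b hab
  unfold phi at hab
  split_ifs at hab with ha hb hb
  · have h1 : (((IndAlph l).orderIsoOfFin rfl).symm ⟨a, ha⟩) =
        (((IndAlph l).orderIsoOfFin rfl).symm ⟨b, hb⟩) := Fin.ext (by omega)
    have h2 := congrArg ((IndAlph l).orderIsoOfFin rfl) h1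
    rw [OrderIso.apply_symm_apply, OrderIso.apply_symm_apply] at h2
    exact congrArg Subtype.val h2
  · have := (((IndAlph l).orderIsoOfFin rfl).symm ⟨a, ha⟩).isLt; omega
  · have := (((IndAlph l).orderIsoOfFin rfl).symm ⟨b, hb⟩).isLt; omega
  · omega

/-- Action of the compacting operator of `l` on a single monomial. -/
noncomputable def cptMon (l : List Mon) (m : Mon) : Mon :=
  ⟨m.1.mapDomain (phi l), by
    constructor
    · intro h
      apply m.2.1
      exact Finsupp.mapDomain_injective (phi_inj l) (by simpa using h)
    · apply Finsupp.mapDomain_notin_range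
      rintro ⟨i, hi⟩
      have := phi_pos l i
      omega⟩

/-- The compacting operator on lists of monomials. -/
noncomputable def cpt (l : List Mon) : List Mon := l.map (cptMon l)

/-- `sub l I` is the sublist of `l` consisting of the entries whose (1-based) position
belongs to `I`. -/
def sub (l : List Mon) (I : Finset ℕ) : List Mon :=
  (List.range l.length).filterMap fun j => if j + 1 ∈ I then l[j]? else none

/-- `∗̄`-irreducible lists: nonempty and with no factorization into two nonempty lists. -/
def SIrred (l : List Mon) : Prop :=
  l ≠ [] ∧ ∀ u v : List Mon, l = sconc u v → u = [] ∨ v = []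

end Mon

/-- The free `k`-module on the set of lists of monomials. -/
abbrev FreeL (k : Type*) [CommRing k] : Type _ := (List Mon) →₀ k

/-- The coproduct `Δ_list`, defined on a basis list `l` of length `n` by
`Δ_list l = Σ_{I ⊆ {1..n}} cpt (l[I]) ⊗ cpt (l[{1..n} \ I])`. -/
noncomputable def deltaList (k : Type*) [CommRing k] :
    FreeL k →ₗ[k] TensorProduct k (FreeL k) (FreeL k) :=
  Finsupp.lift _ k _ fun l =>
    ∑ I ∈ (Finset.Icc 1 l.length).powerset,
      Finsupp.single (Mon.cpt (Mon.sub l I)) (1 : k) ⊗ₜ[k]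
        Finsupp.single (Mon.cpt (Mon.sub l (Finset.Icc 1 l.length \ I))) (1 : k)

/-- The bilinear extension of the shifted concatenation to the free module. -/
noncomputable def sconcL (k : Type*) [CommRing k] : FreeL k →ₗ[k] FreeL k →ₗ[k] FreeL k :=
  Finsupp.lift _ k _ fun u => Finsupp.lift _ k _ fun v => Finsupp.single (Mon.sconc u v) (1 : k)

open Classical in
/-- The counit: coefficient of the empty list. -/
noncomputable def epsL (k : Type*) [CommRing k] : FreeL k →ₗ[k] k :=
  Finsupp.lift _ k _ fun l => if l = ([] : List Mon) then (1 : k) else 0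

/-!
On a basis list `l` of length `n`, both sides of the identity are the sum, over the splittings of
the positions `{1,…,n}` into three ordered blocks `A ⊔ B ⊔ C`, of
`cpt l[A] ⊗ cpt l[B] ⊗ cpt l[C]`. What makes this work is the identity
`Δ_list (cpt l[I]) = Σ_{A ⊆ I} cpt l[A] ⊗ cpt l[I \ A]`: the sublist of `l[I]` at the positions
`J` is `l` at the elements of `I` whose rank in `I` lies in `J`, and since compaction only sees
the relative order of the variable indices, compacting a sublist of a compacted list is the same
as compacting the sublist of the original list.
-/

namespace Finset

/-- Both sides enumerate the splittings `U = A ⊔ B ⊔ C` into three ordered blocks. -/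
lemma sum_powerset_powerset_assoc {α M : Type*} [DecidableEq α] [AddCommMonoid M]
    (U : Finset α) (f : Finset α → Finset α → Finset α → M) :
    ∑ I ∈ U.powerset, ∑ A ∈ I.powerset, f A (I \ A) (U \ I)
      = ∑ A ∈ U.powerset, ∑ B ∈ (U \ A).powerset, f A B ((U \ A) \ B) := by
  rw [sum_sigma', sum_sigma']
  refine sum_nbij' (fun p => ⟨p.2, p.1 \ p.2⟩) (fun p => ⟨p.1 ∪ p.2, p.1⟩)
    ?_ ?_ ?_ ?_ ?_
  all_goals simp only [mem_sigma, mem_powerset]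
  · rintro ⟨I, A⟩ ⟨hI, hA⟩
    exact ⟨hA.trans hI, sdiff_subset_sdiff hI le_rfl⟩
  · rintro ⟨A, B⟩ ⟨hA, hB⟩
    exact ⟨union_subset hA (hB.trans sdiff_subset), subset_union_left⟩
  · rintro ⟨I, A⟩ ⟨-, hA⟩
    simp [union_sdiff_of_subset hA]
  · rintro ⟨A, B⟩ ⟨-, hB⟩
    simp [union_sdiff_cancel_left (disjoint_of_subset_right hB disjoint_sdiff)]
  · rintro ⟨I, A⟩ ⟨-, hA⟩
    rw [sdiff_sdiff_left, sup_eq_union, union_sdiff_of_subset hA]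

variable {α β : Type*} [LinearOrder α] [LinearOrder β]

/-- The rank of `a` in `S`, counted from `1`. -/
def rank (S : Finset α) (a : α) : ℕ := #{s ∈ S | s ≤ a}

def atRanks (S : Finset α) (J : Finset ℕ) : Finset α := {a ∈ S | S.rank a ∈ J}

lemma rank_mem_Icc {S : Finset α} {a : α} (ha : a ∈ S) : S.rank a ∈ Icc 1 #S :=
  mem_Icc.mpr ⟨card_pos.mpr ⟨a, mem_filter.mpr ⟨ha, le_rfl⟩⟩, card_filter_le _ _⟩

lemma rank_strictMonoOn (S : Finset α) : StrictMonoOn S.rank S := by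
  intro a _ b hb hab
  refine card_lt_card ⟨fun s hs => ?_, fun h => ?_⟩
  · exact mem_filter.mpr ⟨(mem_filter.mp hs).1, (mem_filter.mp hs).2.trans hab.le⟩
  · exact hab.not_ge (mem_filter.mp (h (mem_filter.mpr ⟨hb, le_rfl⟩))).2

lemma image_rank (S : Finset α) : S.image S.rank = Icc 1 #S := by
  refine eq_of_subset_of_card_le (image_subset_iff.mpr fun _ => rank_mem_Icc) ?_
  rw [Nat.card_Icc, card_image_of_injOn (rank_strictMonoOn S).injOn]
  omega

lemma rank_image_of_strictMonoOn {S : Finset α} {f : α → β} (hf : StrictMonoOn f S) {a : α}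
    (ha : a ∈ S) : (S.image f).rank (f a) = S.rank a := by
  rw [rank, filter_image, card_image_of_injOn (hf.injOn.mono (filter_subset _ _))]
  congr 1
  exact filter_congr fun s hs => hf.le_iff_le hs ha

lemma orderIsoOfFin_symm_add_one (S : Finset α) {a : α} (ha : a ∈ S) :
    ((S.orderIsoOfFin rfl).symm ⟨a, ha⟩ : ℕ) + 1 = S.rank a := by
  set t := (S.orderIsoOfFin rfl).symm ⟨a, ha⟩
  have hat : S.orderEmbOfFin rfl t = a := by
    rw [← coe_orderIsoOfFin_apply, OrderIso.apply_symm_apply]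
  have hfilter : {s ∈ S | s ≤ a} = (Iic t).map (S.orderEmbOfFin rfl).toEmbedding := by
    ext s
    simp only [mem_filter, mem_map, mem_Iic, RelEmbedding.coe_toEmbedding, ← hat]
    constructor
    · rintro ⟨hs, hsa⟩
      obtain ⟨u, rfl⟩ : s ∈ Set.range (S.orderEmbOfFin rfl) := by
        rwa [range_orderEmbOfFin]
      exact ⟨u, (S.orderEmbOfFin rfl).le_iff_le.mp hsa, rfl⟩
    · rintro ⟨u, hu, rfl⟩
      exact ⟨orderEmbOfFin_mem _ _ _, (S.orderEmbOfFin rfl).le_iff_le.mpr hu⟩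
  rw [rank, hfilter, card_map, Fin.card_Iic]

lemma atRanks_subset (S : Finset α) (J : Finset ℕ) : S.atRanks J ⊆ S := filter_subset _ _

lemma atRanks_image_rank {S A : Finset α} (hA : A ⊆ S) : S.atRanks (A.image S.rank) = A := by
  ext a
  simp only [atRanks, mem_filter, mem_image]
  constructor
  · rintro ⟨ha, b, hb, hab⟩
    rwa [← (rank_strictMonoOn S).injOn (hA hb) ha hab]
  · exact fun ha => ⟨hA ha, a, ha, rfl⟩

lemma image_rank_atRanks {S : Finset α} {J : Finset ℕ} (hJ : J ⊆ Icc 1 #S) :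
    (S.atRanks J).image S.rank = J := by
  ext t
  simp only [atRanks, mem_image, mem_filter]
  constructor
  · rintro ⟨a, ⟨-, ht⟩, rfl⟩
    exact ht
  · intro ht
    obtain ⟨a, ha, rfl⟩ := mem_image.mp ((image_rank S).symm ▸ hJ ht)
    exact ⟨a, ⟨ha, ht⟩, rfl⟩

lemma atRanks_Icc_sdiff (S : Finset α) (J : Finset ℕ) :
    S.atRanks (Icc 1 #S \ J) = S \ S.atRanks J := by
  ext a
  simp only [atRanks, mem_filter, mem_sdiff]
  constructor
  · rintro ⟨ha, -, hJ⟩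
    exact ⟨ha, fun h => hJ h.2⟩
  · rintro ⟨ha, hJ⟩
    exact ⟨ha, rank_mem_Icc ha, fun h => hJ ⟨ha, h⟩⟩

lemma sum_powerset_Icc_card_atRanks {M : Type*} [AddCommMonoid M] (S : Finset α)
    (f : Finset α → M) :
    ∑ J ∈ (Icc 1 #S).powerset, f (S.atRanks J) = ∑ A ∈ S.powerset, f A :=
  sum_nbij' S.atRanks (image S.rank)
    (fun J _ => mem_powerset.mpr (atRanks_subset S J))
    (fun _ hA => mem_powerset.mpr (image_rank S ▸ image_subset_image (mem_powerset.mp hA)))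
    (fun _ hJ => image_rank_atRanks (mem_powerset.mp hJ))
    (fun _ hA => atRanks_image_rank (mem_powerset.mp hA))
    fun _ _ => rfl

/-- If `I` is a set of positions (counted from `1`) in `a :: l`, then `shiftDown I` is the
corresponding set of positions in `l`. -/
def shiftDown (I : Finset ℕ) : Finset ℕ := {i ∈ I | 2 ≤ i}.image (· - 1)

lemma mem_shiftDown {I : Finset ℕ} {i : ℕ} : i ∈ shiftDown I ↔ i + 1 ∈ I ∧ i ≠ 0 := by
  simp only [shiftDown, mem_image, mem_filter]
  constructor
  · rintro ⟨j, ⟨hj, h2⟩, rfl⟩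
    exact ⟨by rwa [Nat.sub_add_cancel (by omega)], by omega⟩
  · rintro ⟨hi, hi0⟩
    exact ⟨i + 1, ⟨hi, by omega⟩, rfl⟩

lemma zero_notMem_shiftDown (I : Finset ℕ) : 0 ∉ shiftDown I := fun h => (mem_shiftDown.mp h).2 rfl

lemma card_shiftDown {I : Finset ℕ} (hI : 0 ∉ I) :
    #(shiftDown I) + (if 1 ∈ I then 1 else 0) = #I := by
  have hmap : (shiftDown I).map (addRightEmbedding 1) = I.erase 1 := by
    ext i
    simp only [mem_map, addRightEmbedding_apply, mem_erase, mem_shiftDown]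
    constructor
    · rintro ⟨j, ⟨hj, hj0⟩, rfl⟩
      exact ⟨by omega, hj⟩
    · rintro ⟨hi1, hi⟩
      have hi0 : i ≠ 0 := by rintro rfl; exact hI hi
      exact ⟨i - 1, ⟨by rwa [Nat.sub_add_cancel (by omega)], by omega⟩, by omega⟩
  rw [← card_map (addRightEmbedding 1), hmap]
  split_ifs with h1
  · exact card_erase_add_one h1
  · rw [erase_eq_of_notMem h1, add_zero]

lemma rank_add_one {S : Finset ℕ} (hS : 0 ∉ S) (a : ℕ) :
    S.rank (a + 1) = (shiftDown S).rank a + (if 1 ∈ S then 1 else 0) := by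
  have hshift : shiftDown {s ∈ S | s ≤ a + 1} = {i ∈ shiftDown S | i ≤ a} := by
    ext i
    simp only [mem_shiftDown, mem_filter, Nat.add_le_add_iff_right]
    tauto
  have h1 : 1 ∈ {s ∈ S | s ≤ a + 1} ↔ 1 ∈ S := by simp
  rw [rank, rank, ← hshift, ← card_shiftDown (fun h => hS (mem_filter.mp h).1)]
  simp only [h1]

lemma one_mem_atRanks {S : Finset ℕ} (hS : 0 ∉ S) (h1 : 1 ∈ S) (J : Finset ℕ) :
    1 ∈ S.atRanks J ↔ 1 ∈ J := by
  have hrank : S.rank 1 = 1 := by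
    rw [rank_add_one hS 0, if_pos h1, rank]
    simp [filter_eq', zero_notMem_shiftDown]
  simp [atRanks, h1, hrank]

lemma shiftDown_atRanks {S : Finset ℕ} (hS : 0 ∉ S) (J : Finset ℕ) :
    shiftDown (S.atRanks J) = (shiftDown S).atRanks (if 1 ∈ S then shiftDown J else J) := by
  ext i
  simp only [mem_shiftDown, atRanks, mem_filter, rank_add_one hS]
  split_ifs with h1
  · have hrank := rank_mem_Icc (S := shiftDown S) (a := i)
    simp only [mem_shiftDown, mem_Icc] at hrank ⊢
    constructor
    · rintro ⟨⟨hi, hJ⟩, hi0⟩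
      exact ⟨⟨hi, hi0⟩, hJ, by have := hrank ⟨hi, hi0⟩; omega⟩
    · rintro ⟨⟨hi, hi0⟩, hJ, -⟩
      exact ⟨⟨hi, hJ⟩, hi0⟩
  · simp only [add_zero]
    tauto

end Finset

namespace Mon

open Finset

lemma sub_cons (a : Mon) (l : List Mon) (I : Finset ℕ) :
    sub (a :: l) I = (if 1 ∈ I then [a] else []) ++ sub l (shiftDown I) := by
  rw [sub, List.length_cons, List.range_succ_eq_map, List.filterMap_cons, List.filterMap_map]
  have htail : ∀ j ∈ List.range l.length,
      ((fun j => if j + 1 ∈ I then (a :: l)[j]? else none) ∘ (· + 1)) j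
        = (fun j => if j + 1 ∈ shiftDown I then l[j]? else none) j := by
    intro j _
    simp [mem_shiftDown]
  rw [List.filterMap_congr htail]
  by_cases h1 : 1 ∈ I <;> simp [h1, sub]

lemma sub_sublist (l : List Mon) (I : Finset ℕ) : (sub l I).Sublist l := by
  induction l generalizing I with
  | nil => exact List.Sublist.slnil
  | cons a l ih =>
    rw [sub_cons]
    split_ifs
    · exact (ih _).cons_cons a
    · exact (ih _).cons a

lemma sub_map (f : Mon → Mon) (l : List Mon) (I : Finset ℕ) :
    sub (l.map f) I = (sub l I).map f := by
  induction l generalizing I with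
  | nil => rfl
  | cons a l ih =>
    rw [List.map_cons, sub_cons, sub_cons, ih, List.map_append]
    split_ifs <;> rfl

lemma length_sub {l : List Mon} {I : Finset ℕ} (hI : I ⊆ Icc 1 l.length) :
    (sub l I).length = #I := by
  induction l generalizing I with
  | nil => simp_all [sub]
  | cons a l ih =>
    have hI0 : 0 ∉ I := fun h => by simpa using hI h
    have htail : shiftDown I ⊆ Icc 1 l.length := by
      intro i hi
      have := mem_Icc.mp (hI (mem_shiftDown.mp hi).1)
      simp only [mem_Icc, List.length_cons] at this ⊢
      have := (mem_shiftDown.mp hi).2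
      omega
    rw [sub_cons, List.length_append, ih htail, ← card_shiftDown hI0]
    split_ifs <;> simp [add_comm]

lemma sub_sub (l : List Mon) {S : Finset ℕ} (hS : 0 ∉ S) (J : Finset ℕ) :
    sub (sub l S) J = sub l (S.atRanks J) := by
  induction l generalizing S J with
  | nil => rfl
  | cons a l ih =>
    rw [sub_cons a l S, sub_cons a l, shiftDown_atRanks hS, ← ih (zero_notMem_shiftDown S)]
    by_cases h1 : 1 ∈ S
    · simp only [h1, if_true, one_mem_atRanks hS h1, List.singleton_append, sub_cons]
    · have h1J : 1 ∉ S.atRanks J := fun h => h1 (atRanks_subset S J h)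
      simp only [h1, h1J, if_false, List.nil_append]

lemma IndAlph_cons (a : Mon) (l : List Mon) : IndAlph (a :: l) = a.1.support ∪ IndAlph l := rfl

lemma mem_IndAlph {i : ℕ} {l : List Mon} : i ∈ IndAlph l ↔ ∃ m ∈ l, i ∈ m.1.support := by
  induction l with
  | nil => simp [IndAlph]
  | cons a l ih => simp [IndAlph_cons, ih]

lemma IndAlph_mono {l₁ l₂ : List Mon} (h : l₁ ⊆ l₂) : IndAlph l₁ ⊆ IndAlph l₂ := by
  intro i hi
  obtain ⟨m, hm, hi⟩ := mem_IndAlph.mp hi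
  exact mem_IndAlph.mpr ⟨m, h hm, hi⟩

lemma IndAlph_map_cptMon (l l' : List Mon) :
    IndAlph (l'.map (cptMon l)) = (IndAlph l').image (phi l) := by
  induction l' with
  | nil => rfl
  | cons a l' ih =>
    rw [List.map_cons, IndAlph_cons, IndAlph_cons, ih, image_union, cptMon,
      Finsupp.mapDomain_support_of_injective (phi_inj l)]

lemma phi_eq_rank {l : List Mon} {i : ℕ} (hi : i ∈ IndAlph l) : phi l i = (IndAlph l).rank i := by
  rw [phi, dif_pos hi, orderIsoOfFin_symm_add_one]

lemma phi_strictMonoOn (l : List Mon) : StrictMonoOn (phi l) (IndAlph l) :=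
  (rank_strictMonoOn _).congr fun _ hi => (phi_eq_rank hi).symm

lemma length_cpt (l : List Mon) : (cpt l).length = l.length := List.length_map _

lemma cpt_map_cptMon {l l' : List Mon} (h : IndAlph l' ⊆ IndAlph l) :
    cpt (l'.map (cptMon l)) = cpt l' := by
  have hmono : StrictMonoOn (phi l) (IndAlph l') := (phi_strictMonoOn l).mono h
  rw [cpt, cpt, List.map_map]
  refine List.map_congr_left fun m hm => Subtype.ext ?_
  change ((m.1.mapDomain (phi l)).mapDomain _) = m.1.mapDomain (phi l')
  rw [← Finsupp.mapDomain_comp]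
  refine Finsupp.mapDomain_congr fun i hi => ?_
  have hiA : i ∈ IndAlph l' := mem_IndAlph.mpr ⟨m, hm, hi⟩
  have hphiA : phi l i ∈ IndAlph (l'.map (cptMon l)) := by
    rw [IndAlph_map_cptMon]
    exact mem_image_of_mem _ hiA
  rw [Function.comp_apply, phi_eq_rank hphiA, phi_eq_rank hiA, IndAlph_map_cptMon,
    rank_image_of_strictMonoOn hmono hiA]

lemma cpt_sub_cpt (l : List Mon) (J : Finset ℕ) : cpt (sub (cpt l) J) = cpt (sub l J) := by
  change cpt (sub (l.map (cptMon l)) J) = _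
  rw [sub_map]
  exact cpt_map_cptMon (IndAlph_mono (sub_sublist l J).subset)

end Mon

open Mon Finset

lemma deltaList_single (k : Type*) [CommRing k] (l : List Mon) :
    deltaList k (Finsupp.single l 1) =
      ∑ I ∈ (Icc 1 l.length).powerset,
        Finsupp.single (cpt (sub l I)) 1 ⊗ₜ[k]
          Finsupp.single (cpt (sub l (Icc 1 l.length \ I))) 1 := by
  rw [deltaList, Finsupp.lift_apply, Finsupp.sum_single_index (by simp), one_smul]

lemma deltaList_single_cpt_sub (k : Type*) [CommRing k] {l : List Mon} {I : Finset ℕ}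
    (hI : I ⊆ Icc 1 l.length) :
    deltaList k (Finsupp.single (cpt (sub l I)) 1) =
      ∑ A ∈ I.powerset,
        Finsupp.single (cpt (sub l A)) 1 ⊗ₜ[k] Finsupp.single (cpt (sub l (I \ A))) 1 := by
  have hI0 : 0 ∉ I := fun h => by simpa using hI h
  rw [deltaList_single, length_cpt, length_sub hI]
  simp only [cpt_sub_cpt, sub_sub _ hI0, atRanks_Icc_sdiff]
  exact sum_powerset_Icc_card_atRanks I
    (fun A => Finsupp.single (cpt (sub l A)) 1 ⊗ₜ[k] Finsupp.single (cpt (sub l (I \ A))) 1)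

lemma assoc_map_deltaList_id_deltaList_single (k : Type*) [CommRing k] (l : List Mon) :
    TensorProduct.assoc k (FreeL k) (FreeL k) (FreeL k)
        (TensorProduct.map (deltaList k) LinearMap.id (deltaList k (Finsupp.single l 1)))
      = ∑ I ∈ (Icc 1 l.length).powerset, ∑ A ∈ I.powerset,
          Finsupp.single (cpt (sub l A)) 1 ⊗ₜ[k] (Finsupp.single (cpt (sub l (I \ A))) 1 ⊗ₜ[k]
            Finsupp.single (cpt (sub l (Icc 1 l.length \ I))) (1 : k)) := by
  rw [deltaList_single, map_sum, map_sum]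
  refine sum_congr rfl fun I hI => ?_
  rw [TensorProduct.map_tmul, deltaList_single_cpt_sub k (mem_powerset.mp hI),
    TensorProduct.sum_tmul, map_sum]
  rfl

lemma map_id_deltaList_deltaList_single (k : Type*) [CommRing k] (l : List Mon) :
    TensorProduct.map LinearMap.id (deltaList k) (deltaList k (Finsupp.single l 1))
      = ∑ A ∈ (Icc 1 l.length).powerset, ∑ B ∈ (Icc 1 l.length \ A).powerset,
          Finsupp.single (cpt (sub l A)) 1 ⊗ₜ[k] (Finsupp.single (cpt (sub l B)) 1 ⊗ₜ[k]
            Finsupp.single (cpt (sub l ((Icc 1 l.length \ A) \ B))) (1 : k)) := by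
  rw [deltaList_single, map_sum]
  refine sum_congr rfl fun A _ => ?_
  rw [TensorProduct.map_tmul, LinearMap.id_apply, deltaList_single_cpt_sub k sdiff_subset,
    TensorProduct.tmul_sum]

/-- ** Statement 8 **: the coproduct is coassociative. -/
theorem deltaList_coassoc (k : Type*) [CommRing k] (x : FreeL k) :
    (TensorProduct.assoc k (FreeL k) (FreeL k) (FreeL k))
        ((TensorProduct.map (deltaList k) (LinearMap.id : FreeL k →ₗ[k] FreeL k))
          ((deltaList k) x))
      = (TensorProduct.map (LinearMap.id : FreeL k →ₗ[k] FreeL k) (deltaList k))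
          ((deltaList k) x) := by
  suffices h : (TensorProduct.assoc k (FreeL k) (FreeL k) (FreeL k)).toLinearMap ∘ₗ
      TensorProduct.map (deltaList k) LinearMap.id ∘ₗ deltaList k
        = TensorProduct.map LinearMap.id (deltaList k) ∘ₗ deltaList k from
    LinearMap.congr_fun h x
  refine Finsupp.lhom_ext' fun l => LinearMap.ext_ring ?_
  simp only [LinearMap.comp_apply, Finsupp.lsingle_apply, LinearEquiv.coe_coe,
    assoc_map_deltaList_id_deltaList_single, map_id_deltaList_deltaList_single]
  exact sum_powerset_powerset_assoc _ fun A B C => Finsupp.single (cpt (sub l A)) 1 ⊗ₜ[k]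
    (Finsupp.single (cpt (sub l B)) 1 ⊗ₜ[k] Finsupp.single (cpt (sub l C)) (1 : k))
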